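/- Let H be a real inner product space, let K : M × M → ℝ satisfy K(x,y) = ⟨Φ(x), Φ(y)⟩ for a map Φ : M → H. Then for any points x, x₁, …, xₙ ∈ M such that the Gram matrix K_{n,n} = (K(x_i,x_j))_{1≤i,j≤n} is invertible, the squared distance from Φ(x) to the span of Φ(x₁), …, Φ(xₙ) equals K(x,x) - k_n(x)ᵀ K_{n,n}⁻¹ k_n(x), where k_n(x) = (K(x,x₁), …, K(x,xₙ))ᵀ. -/

import Mathlib

/-!
The nearest point of `span {v i}` to `u` is `p = ∑ cᵢ vᵢ` with `Gram(v) c = kᵤ`, `kᵤ i = ⟪u, vᵢ⟫`: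
these normal equations say exactly that `u - p` is orthogonal to every `vᵢ`. Then
`dist(u, span)² = ⟪u - p, u - p⟫ = ⟪u - p, u⟫ = ⟪u, u⟫ - kᵤ ⬝ᵥ c`, and for the feature map
`⟪Φ x, Φ y⟫ = K x y` the Gram matrix is `Kₙₙ`, so `c = Kₙₙ⁻¹ kₙ(x)`.
-/

open Matrix
open scoped RealInnerProductSpace

theorem Submodule.infDist_eq_norm_sub_of_inner_eq_zero {𝕜 E : Type*} [RCLike 𝕜]
    [NormedAddCommGroup E] [InnerProductSpace 𝕜 E] (K : Submodule 𝕜 E) {u v : E} (hv : v ∈ K)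
    (h : ∀ w ∈ K, inner 𝕜 (u - v) w = 0) :
    Metric.infDist u (K : Set E) = ‖u - v‖ := by
  rw [Metric.infDist_eq_iInf, (K.norm_eq_iInf_iff_inner_eq_zero hv).mpr h]
  simp only [dist_eq_norm]
  rfl

theorem inner_span_range_eq_zero {E ι : Type*} [NormedAddCommGroup E] [InnerProductSpace ℝ E]
    {v : ι → E} {u : E} (h : ∀ i, ⟪u, v i⟫ = 0) {w : E}
    (hw : w ∈ Submodule.span ℝ (Set.range v)) : ⟪u, w⟫ = 0 := by
  have hle : Submodule.span ℝ (Set.range v) ≤ (ℝ ∙ u)ᗮ :=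
    Submodule.span_le.mpr <| Set.range_subset_iff.mpr fun i =>
      Submodule.mem_orthogonal_singleton_iff_inner_right.mpr (h i)
  exact Submodule.mem_orthogonal_singleton_iff_inner_right.mp (hle hw)

section GramNormalEquations

variable {E ι : Type*} [NormedAddCommGroup E] [InnerProductSpace ℝ E] [Fintype ι]
  {v : ι → E} {u : E} {c : ι → ℝ}

theorem gram_mulVec_apply_eq_inner_sum (v : ι → E) (c : ι → ℝ) (j : ι) :
    (gram ℝ v *ᵥ c) j = ⟪v j, ∑ i, c i • v i⟫ := by
  simp only [mulVec, dotProduct, gram_apply, inner_sum, real_inner_smul_right, mul_comm]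

theorem inner_sub_sum_smul_eq_zero_of_gram_mulVec
    (hc : gram ℝ v *ᵥ c = fun i => ⟪u, v i⟫) (j : ι) :
    ⟪u - ∑ i, c i • v i, v j⟫ = 0 := by
  rw [inner_sub_left, real_inner_comm (v j) (∑ i, c i • v i), ← gram_mulVec_apply_eq_inner_sum, hc, sub_self]

theorem infDist_span_range_sq_of_gram_mulVec (hc : gram ℝ v *ᵥ c = fun i => ⟪u, v i⟫) :
    Metric.infDist u (Submodule.span ℝ (Set.range v) : Set E) ^ 2 =
      ⟪u, u⟫ - (fun i => ⟪u, v i⟫) ⬝ᵥ c := by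
  set p := ∑ i, c i • v i
  have hp : p ∈ Submodule.span ℝ (Set.range v) :=
    Submodule.sum_mem _ fun i _ => Submodule.smul_mem _ _ (Submodule.subset_span ⟨i, rfl⟩)
  have horth : ∀ w ∈ Submodule.span ℝ (Set.range v), ⟪u - p, w⟫ = 0 := fun _ =>
    inner_span_range_eq_zero (inner_sub_sum_smul_eq_zero_of_gram_mulVec hc)
  rw [Submodule.infDist_eq_norm_sub_of_inner_eq_zero _ hp horth, ← real_inner_self_eq_norm_sq,
    inner_sub_right, horth p hp, sub_zero, inner_sub_left, sum_inner]
  simp only [real_inner_smul_left, real_inner_comm u (v _), dotProduct, mul_comm]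

end GramNormalEquations

/-- The squared distance from a feature vector `Φ x` to the span of the feature vectors at
the design points equals `K(x,x) - kₙ(x)ᵀ Kₙₙ⁻¹ kₙ(x)`. -/
theorem stmt_2 {H : Type*} [NormedAddCommGroup H] [InnerProductSpace ℝ H]
    {M : Type*} (Φ : M → H) (K : M → M → ℝ) (hK : ∀ x y, K x y = ⟪Φ x, Φ y⟫)
    {n : ℕ} (x : M) (X : Fin n → M)
    (G : Matrix (Fin n) (Fin n) ℝ) (hG : ∀ i j, G i j = K (X i) (X j))
    (hGinv : IsUnit G) :
    (Metric.infDist (Φ x)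
        (Submodule.span ℝ (Set.range fun i => Φ (X i)) : Set H)) ^ 2 =
      K x x - (fun i => K x (X i)) ⬝ᵥ (G⁻¹ *ᵥ fun i => K x (X i)) := by
  have hGram : G = gram ℝ (fun i => Φ (X i)) := by
    ext i j
    rw [hG, hK, gram_apply]
  have hk : (fun i => K x (X i)) = fun i => ⟪Φ x, Φ (X i)⟫ := funext fun i => hK x (X i)
  have hnormal : G *ᵥ (G⁻¹ *ᵥ fun i => K x (X i)) = fun i => K x (X i) := by
    rw [mulVec_mulVec, mul_nonsing_inv _ ((isUnit_iff_isUnit_det G).mp hGinv), one_mulVec]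
  rw [hGram, hk] at hnormal
  rw [hK, hk, infDist_span_range_sq_of_gram_mulVec hnormal, hGram]
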